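/- For every integer d ≥ 1 and every y ∈ ℝ^{2d+1} with ‖y‖_∞ ≤ 1, the matrices (d+1)·I − Λ₁(y) and (d+1)·I − Λ₂(y) are positive semidefinite; equivalently, every eigenvalue of Λ₁(y) and every eigenvalue of Λ₂(y) is at most d + 1. (This yields the bound k₃ ≤ d + 1 for the Chebyshev-basis operator.) -/

import Mathlib

open Matrix

/-- The first block of the Chebyshev-basis operator `Λ` for nonnegative
polynomials of degree `2d` on `[−1,1]` with weights `(1, 1 − z²)`:
`Λ₁(y)_{i,j} = (y_{i+j} + y_{|i−j|})/2`.  Here `a - b + (b - a)` (truncated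
subtraction) equals `|a − b|`. -/
noncomputable def lam1 (d : ℕ) (y : Fin (2 * d + 1) → ℝ) :
    Matrix (Fin (d + 1)) (Fin (d + 1)) ℝ :=
  Matrix.of fun i j =>
    (y ⟨i.1 + j.1, by have := i.isLt; have := j.isLt; omega⟩ +
      y ⟨i.1 - j.1 + (j.1 - i.1), by have := i.isLt; have := j.isLt; omega⟩) / 2

/-- The second block:
`Λ₂(y)_{i,j} = (1/8)(2y_{i+j} + 2y_{|i−j|} − y_{i+j+2} − y_{|i+j−2|} − y_{|i−j|+2} − y_{||i−j|−2|})`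
for `0 ≤ i, j ≤ d − 1` (again `a - b + (b - a)` encodes `|a − b|`). -/
noncomputable def lam2 (d : ℕ) (y : Fin (2 * d + 1) → ℝ) :
    Matrix (Fin d) (Fin d) ℝ :=
  Matrix.of fun i j =>
    (2 * y ⟨i.1 + j.1, by have := i.isLt; have := j.isLt; omega⟩ +
      2 * y ⟨i.1 - j.1 + (j.1 - i.1), by have := i.isLt; have := j.isLt; omega⟩ -
      y ⟨i.1 + j.1 + 2, by have := i.isLt; have := j.isLt; omega⟩ -
      y ⟨(i.1 + j.1) - 2 + (2 - (i.1 + j.1)), by have := i.isLt; have := j.isLt; omega⟩ -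
      y ⟨(i.1 - j.1 + (j.1 - i.1)) + 2, by have := i.isLt; have := j.isLt; omega⟩ -
      y ⟨(i.1 - j.1 + (j.1 - i.1)) - 2 + (2 - (i.1 - j.1 + (j.1 - i.1))),
        by have := i.isLt; have := j.isLt; omega⟩) / 8

/-!
Every entry of `Λ₁(y)` and of `Λ₂(y)` is a combination of entries of `y` whose coefficients
have absolute values summing to at most `1`, so it lies in `[-1, 1]`. For a symmetric
`n × n` matrix `A` with entries bounded by `M`, `xᵀ A x ≤ M (∑ |xᵢ|)² ≤ n M ‖x‖²` by
Cauchy–Schwarz, so `c • 1 - A` is positive semidefinite once `n M ≤ c`; both blocks have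
size at most `d + 1`.
-/

theorem Matrix.posSemidef_smul_one_sub_of_abs_apply_le {ι : Type*} [Fintype ι] [DecidableEq ι]
    {A : Matrix ι ι ℝ} (hA : A.IsHermitian) {M c : ℝ} (hM : ∀ i j, |A i j| ≤ M)
    (hc : Fintype.card ι * M ≤ c) :
    (c • (1 : Matrix ι ι ℝ) - A).PosSemidef := by
  refine posSemidef_iff_dotProduct_mulVec.2
    ⟨(isHermitian_one.smul (IsSelfAdjoint.all c)).sub hA, fun x => ?_⟩
  simp only [star_trivial, sub_mulVec, dotProduct_sub, smul_mulVec, one_mulVec,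
    dotProduct_smul, smul_eq_mul, sub_nonneg]
  rcases isEmpty_or_nonempty ι with hι | ⟨⟨i₀⟩⟩
  · simp [dotProduct]
  have hM0 : 0 ≤ M := (abs_nonneg _).trans (hM i₀ i₀)
  have hquad : x ⬝ᵥ A *ᵥ x ≤ M * (∑ i, |x i|) ^ 2 := by
    calc x ⬝ᵥ A *ᵥ x = ∑ i, ∑ j, x i * A i j * x j := by
          simp only [dotProduct, mulVec, Finset.mul_sum, mul_assoc]
      _ ≤ ∑ i, ∑ j, M * (|x i| * |x j|) := by
          refine Finset.sum_le_sum fun i _ => Finset.sum_le_sum fun j _ => ?_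
          calc x i * A i j * x j ≤ |x i * A i j * x j| := le_abs_self _
            _ = |A i j| * (|x i| * |x j|) := by rw [abs_mul, abs_mul]; ring
            _ ≤ M * (|x i| * |x j|) := by gcongr; exact hM i j
      _ = M * (∑ i, |x i|) ^ 2 := by
          rw [sq, Finset.sum_mul_sum, Finset.mul_sum]
          simp only [Finset.mul_sum]
  have hCS : (∑ i, |x i|) ^ 2 ≤ Fintype.card ι * (x ⬝ᵥ x) := by
    simpa [dotProduct, sq] using
      sq_sum_le_card_mul_sum_sq (s := Finset.univ) (f := fun i => |x i|)
  have hxx : 0 ≤ x ⬝ᵥ x := Finset.sum_nonneg fun i _ => mul_self_nonneg (x i)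
  calc x ⬝ᵥ A *ᵥ x ≤ M * (Fintype.card ι * (x ⬝ᵥ x)) := hquad.trans (by gcongr)
    _ = (Fintype.card ι * M) * (x ⬝ᵥ x) := by ring
    _ ≤ c * (x ⬝ᵥ x) := by gcongr

lemma isHermitian_lam1 (d : ℕ) (y : Fin (2 * d + 1) → ℝ) : (lam1 d y).IsHermitian := by
  ext i j
  simp only [lam1, conjTranspose_apply, of_apply, star_trivial, add_comm (j : ℕ) i,
    add_comm ((j : ℕ) - i)]

lemma isHermitian_lam2 (d : ℕ) (y : Fin (2 * d + 1) → ℝ) : (lam2 d y).IsHermitian := by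
  ext i j
  simp only [lam2, conjTranspose_apply, of_apply, star_trivial, add_comm (j : ℕ) i,
    add_comm ((j : ℕ) - i)]

lemma abs_add_div_two_le_one {a b : ℝ} (ha : |a| ≤ 1) (hb : |b| ≤ 1) :
    |(a + b) / 2| ≤ 1 := by
  rw [abs_le] at *
  constructor <;> linarith

lemma abs_two_mul_add_two_mul_sub_sub_sub_sub_div_eight_le_one {a b c d e f : ℝ}
    (ha : |a| ≤ 1) (hb : |b| ≤ 1) (hc : |c| ≤ 1) (hd : |d| ≤ 1) (he : |e| ≤ 1)
    (hf : |f| ≤ 1) :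
    |(2 * a + 2 * b - c - d - e - f) / 8| ≤ 1 := by
  rw [abs_le] at *
  constructor <;> linarith

lemma abs_lam1_apply_le_one {d : ℕ} {y : Fin (2 * d + 1) → ℝ} (hy : ∀ k, |y k| ≤ 1)
    (i j : Fin (d + 1)) : |lam1 d y i j| ≤ 1 :=
  abs_add_div_two_le_one (hy _) (hy _)

lemma abs_lam2_apply_le_one {d : ℕ} {y : Fin (2 * d + 1) → ℝ} (hy : ∀ k, |y k| ≤ 1)
    (i j : Fin d) : |lam2 d y i j| ≤ 1 :=
  abs_two_mul_add_two_mul_sub_sub_sub_sub_div_eight_le_one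
    (hy _) (hy _) (hy _) (hy _) (hy _) (hy _)

theorem stmt19_general (d : ℕ) (y : Fin (2 * d + 1) → ℝ)
    (hy : ∀ k, |y k| ≤ 1) :
    (((d : ℝ) + 1) • (1 : Matrix (Fin (d + 1)) (Fin (d + 1)) ℝ) - lam1 d y).PosSemidef ∧
      (((d : ℝ) + 1) • (1 : Matrix (Fin d) (Fin d) ℝ) - lam2 d y).PosSemidef :=
  ⟨posSemidef_smul_one_sub_of_abs_apply_le (isHermitian_lam1 d y)
      (abs_lam1_apply_le_one hy) (by simp),
    posSemidef_smul_one_sub_of_abs_apply_le (isHermitian_lam2 d y)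
      (abs_lam2_apply_le_one hy) (by simp)⟩

/-- if `‖y‖_∞ ≤ 1` then `(d+1)·I − Λ₁(y)` and `(d+1)·I − Λ₂(y)`
are positive semidefinite, i.e. every eigenvalue of `Λ₁(y)` and of `Λ₂(y)` is at
most `d + 1` (the bound `k₃ ≤ d + 1`). -/
theorem stmt19 (d : ℕ) (hd : 1 ≤ d) (y : Fin (2 * d + 1) → ℝ)
    (hy : ∀ k, |y k| ≤ 1) :
    (((d : ℝ) + 1) • (1 : Matrix (Fin (d + 1)) (Fin (d + 1)) ℝ) - lam1 d y).PosSemidef ∧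
      (((d : ℝ) + 1) • (1 : Matrix (Fin d) (Fin d) ℝ) - lam2 d y).PosSemidef :=
  stmt19_general d y hy
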